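/- The function F(x) = ‖x⁺‖_p² (squared p-norm of the positive part of x) on ℝ^n, for p ≥ 2, satisfies F((x+y)⁺) ≤ F(x) + ⟨g, y⟩ + (p−1)‖y‖_p² for some subgradient g of F at x, i.e., F is positive invariant and smooth with constant L = 2(p−1) with respect to the p-norm. -/

import Mathlib

/-- The `p`-norm of a vector in `ℝ^n`. -/
noncomputable def pNorm {n : ℕ} (p : ℝ) (x : Fin n → ℝ) : ℝ :=
  (∑ i, |x i| ^ p) ^ (1 / p)

/-- The squared-`p`-norm-of-positive-part potential. -/
noncomputable def polyPot {n : ℕ} (p : ℝ) (x : Fin n → ℝ) : ℝ :=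
  pNorm p (fun i => max (x i) 0) ^ 2

/-!
With `S(v) = ∑ (vᵢ⁺)^p`, the potential `F = S^(2/p)` has gradient `g(v) = 2 S^((2-p)/p) (v⁺)^(p-1)`.
Euler's identity `⟨g(x), x⟩ = 2 F(x)` and Hölder's bound `⟨g(x), z⟩ ≤ 2 ‖x⁺‖_p ‖z⁺‖_p` make `g(x)`
a subgradient. For smoothness, `ψ(t) = F(x + t y)` has derivative `G(t) = ⟨g(x + t y), y⟩`, and `G`
is continuous and differentiable except where a coordinate of `x + t y` with `yᵢ ≠ 0` vanishes.
Differentiating `G = 2 S^((2-p)/p) ⟨(v⁺)^(p-1), y⟩`, the first factor contributes a nonpositive term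
for `p ≥ 2`, and Hölder with exponents `p/(p-2)` and `p/2` bounds the second by `2(p-1)‖y‖_p²`.
Integrating `G' ≤ 2(p-1)‖y‖_p²` twice over `[0, 1]` gives the bound, since `F((x+y)⁺) = F(x+y)`.
-/

open Real Finset Filter Topology Set Asymptotics

theorem hasDerivAt_zero_of_abs_le {f g : ℝ → ℝ} {t : ℝ} (hg : HasDerivAt g 0 t) (hgt : g t = 0)
    (hft : f t = 0) (hfg : ∀ s, |f s| ≤ g s) : HasDerivAt f 0 t := by
  rw [hasDerivAt_iff_isLittleO] at hg ⊢
  simp only [hft, hgt, sub_zero, smul_zero] at hg ⊢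
  refine (IsBigO.of_bound 1 (Eventually.of_forall fun s => ?_)).trans_isLittleO hg
  rw [one_mul, Real.norm_eq_abs, Real.norm_eq_abs]
  exact (hfg s).trans (le_abs_self _)

theorem hasDerivAt_max_zero_rpow_of_pos {q r : ℝ} (hr : 0 < r) :
    HasDerivAt (fun s => max s 0 ^ q) (q * r ^ (q - 1)) r :=
  (hasDerivAt_rpow_const (Or.inl hr.ne')).congr_of_eventuallyEq <|
    (lt_mem_nhds hr).mono fun s hs => by simp only [max_eq_left hs.le]

theorem hasDerivAt_max_zero_rpow_of_neg {q r : ℝ} (hq : 0 < q) (hr : r < 0) :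
    HasDerivAt (fun s => max s 0 ^ q) 0 r :=
  (hasDerivAt_const r 0).congr_of_eventuallyEq <|
    (gt_mem_nhds hr).mono fun s hs => by simp only [max_eq_right hs.le, zero_rpow hq.ne']

theorem hasDerivAt_max_zero_rpow {q : ℝ} (hq : 1 < q) (r : ℝ) :
    HasDerivAt (fun s => max s 0 ^ q) (q * max r 0 ^ (q - 1)) r := by
  have hq0 : q ≠ 0 := by linarith
  have hq1 : q - 1 ≠ 0 := (sub_pos.2 hq).ne'
  rcases lt_trichotomy r 0 with hr | rfl | hr
  · rw [max_eq_right hr.le, zero_rpow hq1, mul_zero]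
    exact hasDerivAt_max_zero_rpow_of_neg (by linarith) hr
  · rw [max_self, zero_rpow hq1, mul_zero]
    refine hasDerivAt_zero_of_abs_le (g := fun s => |s| ^ q) ?_ (by simp [hq0]) (by simp [hq0])
      fun s => ?_
    · simpa using hasDerivAt_abs_rpow 0 hq
    · rw [abs_of_nonneg (rpow_nonneg (le_max_right _ _) _)]
      exact rpow_le_rpow (le_max_right _ _) (max_le (le_abs_self _) (abs_nonneg _)) (by linarith)
  · rw [max_eq_left hr.le]
    exact hasDerivAt_max_zero_rpow_of_pos hr

theorem sub_le_mul_sub_of_hasDerivAt_le_off_finset {f : ℝ → ℝ} {C : ℝ} (E : Finset ℝ) :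
    ∀ {a b : ℝ}, a ≤ b → ContinuousOn f (Icc a b) →
      (∀ t ∈ Ioo a b, t ∉ E → ∃ d ≤ C, HasDerivAt f d t) → f b - f a ≤ C * (b - a) := by
  classical
  induction E using Finset.induction_on with
  | empty =>
    intro a b hab hf hf'
    have hd : ∀ t ∈ interior (Icc a b), ∃ d ≤ C, HasDerivAt f d t := fun t ht =>
      hf' t (by rwa [interior_Icc] at ht) (Finset.notMem_empty t)
    refine (convex_Icc a b).image_sub_le_mul_sub_of_deriv_le hf (fun t ht => ?_) (fun t ht => ?_)
      a (left_mem_Icc.2 hab) b (right_mem_Icc.2 hab) hab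
    · obtain ⟨d, -, hd⟩ := hd t ht
      exact hd.differentiableAt.differentiableWithinAt
    · obtain ⟨d, hdC, hd⟩ := hd t ht
      rwa [hd.deriv]
  | insert e E he ih =>
    intro a b hab hf hf'
    by_cases he' : e ∈ Ioo a b
    · have hae := ih he'.1.le (hf.mono (Icc_subset_Icc_right he'.2.le)) fun t ht htE =>
        hf' t ⟨ht.1, ht.2.trans he'.2⟩ (by simp [htE, ht.2.ne])
      have heb := ih he'.2.le (hf.mono (Icc_subset_Icc_left he'.1.le)) fun t ht htE =>
        hf' t ⟨he'.1.trans ht.1, ht.2⟩ (by simp [htE, ht.1.ne'])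
      linarith
    · exact ih hab hf fun t ht htE => hf' t ht <| by
        simp only [Finset.mem_insert, not_or]
        exact ⟨fun h => he' (h ▸ ht), htE⟩

theorem le_add_deriv_add_of_deriv_sub_le {f f' : ℝ → ℝ} {L : ℝ}
    (hf : ∀ t, HasDerivAt f (f' t) t) (hf' : ∀ t ∈ Icc (0 : ℝ) 1, f' t - f' 0 ≤ L * t) :
    f 1 ≤ f 0 + f' 0 + L / 2 := by
  set θ : ℝ → ℝ := fun t => f t - f' 0 * t - L / 2 * t ^ 2
  have hθ : ∀ t, HasDerivAt θ (f' t - f' 0 - L * t) t := fun t => by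
    refine (((hf t).fun_sub ((hasDerivAt_id t).const_mul (f' 0))).fun_sub
      ((hasDerivAt_pow 2 t).const_mul (L / 2))).congr_deriv ?_
    simp only [mul_one, Nat.cast_ofNat]
    ring
  have hθ_anti : AntitoneOn θ (Icc 0 1) :=
    antitoneOn_of_hasDerivWithinAt_nonpos (convex_Icc 0 1)
      (fun t _ => (hθ t).continuousAt.continuousWithinAt) (fun t _ => (hθ t).hasDerivWithinAt)
      fun t ht => by
        rw [interior_Icc] at ht
        linarith [hf' t (Ioo_subset_Icc_self ht)]
  have := hθ_anti (left_mem_Icc.2 zero_le_one) (right_mem_Icc.2 zero_le_one) zero_le_one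
  simp only [θ] at this
  linarith

section Holder

variable {ι : Type*} [Fintype ι] {p : ℝ}

theorem abs_sum_rpow_sub_one_mul_le (hp : 1 < p) {a : ι → ℝ} (ha : ∀ i, 0 ≤ a i) (w : ι → ℝ) :
    |∑ i, a i ^ (p - 1) * w i| ≤ (∑ i, a i ^ p) ^ ((p - 1) / p) * (∑ i, |w i| ^ p) ^ (1 / p) := by
  have hpq : (p / (p - 1)).HolderConjugate p := (HolderConjugate.conjExponent hp).symm
  calc |∑ i, a i ^ (p - 1) * w i| ≤ ∑ i, a i ^ (p - 1) * |w i| :=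
        (abs_sum_le_sum_abs _ _).trans_eq <| sum_congr rfl fun i _ => by
          rw [abs_mul, abs_of_nonneg (rpow_nonneg (ha i) _)]
    _ ≤ (∑ i, (a i ^ (p - 1)) ^ (p / (p - 1))) ^ (1 / (p / (p - 1))) * (∑ i, |w i| ^ p) ^ (1 / p) :=
        inner_le_Lp_mul_Lq_of_nonneg univ hpq (fun i _ => rpow_nonneg (ha i) _)
          fun i _ => abs_nonneg _
    _ = _ := by
        have hp1 : p - 1 ≠ 0 := (sub_pos.2 hp).ne'
        rw [one_div_div]
        congr 2
        refine sum_congr rfl fun i _ => ?_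
        rw [← rpow_mul (ha i)]
        congr 1
        field_simp

theorem sum_ite_rpow_mul_sq_le (hp : 2 ≤ p) (u w : ι → ℝ) :
    ∑ i, (if 0 < u i then u i ^ (p - 2) else 0) * w i ^ 2
      ≤ (∑ i, max (u i) 0 ^ p) ^ ((p - 2) / p) * (∑ i, |w i| ^ p) ^ (2 / p) := by
  rcases hp.eq_or_lt with rfl | hp
  · rw [show ((2 : ℝ) - 2) / 2 = 0 by norm_num, show (2 : ℝ) / 2 = 1 by norm_num, rpow_zero,
      one_mul, rpow_one]
    refine sum_le_sum fun i _ => ?_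
    rw [sub_self, rpow_zero, show |w i| ^ (2 : ℝ) = w i ^ 2 by norm_cast; exact sq_abs _]
    split_ifs <;> nlinarith [sq_nonneg (w i)]
  · have hp2 : p - 2 ≠ 0 := (sub_pos.2 hp).ne'
    have hpq : (p / (p - 2)).HolderConjugate (p / 2) := by
      rw [holderConjugate_iff]
      refine ⟨?_, ?_⟩
      · rw [lt_div_iff₀ (by linarith)]; linarith
      · field_simp; ring
    have hite : ∀ i, (if 0 < u i then u i ^ (p - 2) else 0) = max (u i) 0 ^ (p - 2) := fun i => by
      split_ifs with h
      · rw [max_eq_left h.le]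
      · rw [max_eq_right (not_lt.1 h), zero_rpow hp2]
    simp only [hite]
    calc ∑ i, max (u i) 0 ^ (p - 2) * w i ^ 2
        ≤ (∑ i, (max (u i) 0 ^ (p - 2)) ^ (p / (p - 2))) ^ (1 / (p / (p - 2)))
          * (∑ i, (w i ^ 2) ^ (p / 2)) ^ (1 / (p / 2)) :=
          inner_le_Lp_mul_Lq_of_nonneg univ hpq (fun i _ => rpow_nonneg (le_max_right _ _) _)
            fun i _ => sq_nonneg _
      _ = _ := by
        rw [one_div_div, one_div_div]
        congr 2 <;> refine sum_congr rfl fun i _ => ?_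
        · rw [← rpow_mul (le_max_right _ _)]
          congr 1
          field_simp
        · rw [← sq_abs, ← rpow_natCast, ← rpow_mul (abs_nonneg _)]
          congr 1
          push_cast
          ring

end Holder

noncomputable def posPowSum {n : ℕ} (p : ℝ) (v : Fin n → ℝ) : ℝ :=
  ∑ i, max (v i) 0 ^ p

-- Where `v⁺ = 0`, the junk value of `0 ^ ((2 - p) / p)` is multiplied by `0`.
noncomputable def polyPotGrad {n : ℕ} (p : ℝ) (v : Fin n → ℝ) (i : Fin n) : ℝ :=
  2 * posPowSum p v ^ ((2 - p) / p) * max (v i) 0 ^ (p - 1)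

noncomputable def polyPotDeriv {n : ℕ} (p : ℝ) (v w : Fin n → ℝ) : ℝ :=
  ∑ i, polyPotGrad p v i * w i

section Potential

variable {n : ℕ} {p : ℝ}

theorem posPowSum_nonneg (p : ℝ) (v : Fin n → ℝ) : 0 ≤ posPowSum p v :=
  sum_nonneg fun _ _ => rpow_nonneg (le_max_right _ _) _

theorem posPowSum_eq_zero_iff (hp : 0 < p) {v : Fin n → ℝ} :
    posPowSum p v = 0 ↔ ∀ i, v i ≤ 0 := by
  simp only [posPowSum, sum_eq_zero_iff_of_nonneg fun _ _ => rpow_nonneg (le_max_right _ _) _,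
    rpow_eq_zero (le_max_right _ _) hp.ne', max_eq_right_iff, Finset.mem_univ, true_implies]

theorem pNorm_max_zero (p : ℝ) (v : Fin n → ℝ) :
    pNorm p (fun i => max (v i) 0) = posPowSum p v ^ (1 / p) := by
  unfold pNorm posPowSum
  congr 1
  exact sum_congr rfl fun i _ => by rw [abs_of_nonneg (le_max_right _ _)]

theorem rpow_one_div_sq {a : ℝ} (ha : 0 ≤ a) (p : ℝ) : (a ^ (1 / p)) ^ 2 = a ^ (2 / p) := by
  rw [← rpow_mul_natCast ha]
  ring_nf

theorem polyPot_eq_posPowSum_rpow (p : ℝ) (v : Fin n → ℝ) :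
    polyPot p v = posPowSum p v ^ (2 / p) := by
  rw [polyPot, pNorm_max_zero, rpow_one_div_sq (posPowSum_nonneg p v)]

theorem pNorm_sq (p : ℝ) (v : Fin n → ℝ) : pNorm p v ^ 2 = (∑ i, |v i| ^ p) ^ (2 / p) :=
  rpow_one_div_sq (sum_nonneg fun _ _ => rpow_nonneg (abs_nonneg _) _) p

theorem polyPot_max_zero (p : ℝ) (v : Fin n → ℝ) :
    polyPot p (fun i => max (v i) 0) = polyPot p v := by
  simp only [polyPot, max_eq_left (le_max_right _ (0 : ℝ))]

theorem polyPotDeriv_of_posPowSum_eq_zero (hp : 1 < p) {v : Fin n → ℝ}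
    (h : posPowSum p v = 0) (w : Fin n → ℝ) : polyPotDeriv p v w = 0 := by
  refine sum_eq_zero fun i _ => ?_
  rw [polyPotGrad, max_eq_right ((posPowSum_eq_zero_iff (by linarith)).1 h i),
    zero_rpow (sub_pos.2 hp).ne', mul_zero, zero_mul]

theorem polyPotGrad_nonneg (p : ℝ) (v : Fin n → ℝ) (i : Fin n) : 0 ≤ polyPotGrad p v i := by
  unfold polyPotGrad
  have := posPowSum_nonneg p v
  have := le_max_right (v i) 0
  positivity

theorem polyPotDeriv_eq (p : ℝ) (v w : Fin n → ℝ) :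
    polyPotDeriv p v w
      = 2 * posPowSum p v ^ ((2 - p) / p) * ∑ i, max (v i) 0 ^ (p - 1) * w i := by
  simp only [polyPotDeriv, polyPotGrad, mul_sum, mul_assoc]

theorem max_zero_rpow_sub_one_mul_self (hp : 1 < p) (r : ℝ) :
    max r 0 ^ (p - 1) * r = max r 0 ^ p := by
  rcases le_or_gt r 0 with hr | hr
  · rw [max_eq_right hr, zero_rpow (sub_pos.2 hp).ne', zero_rpow (by linarith), zero_mul]
  · rw [max_eq_left hr.le, rpow_sub_one hr.ne', div_mul_cancel₀ _ hr.ne']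

theorem polyPotDeriv_self (hp : 1 < p) (v : Fin n → ℝ) :
    polyPotDeriv p v v = 2 * polyPot p v := by
  have he : (2 - p) / p + 1 = 2 / p := by field_simp; ring
  rw [polyPotDeriv_eq, polyPot_eq_posPowSum_rpow]
  simp only [max_zero_rpow_sub_one_mul_self hp]
  rw [mul_assoc, ← posPowSum, ← rpow_add_one' (posPowSum_nonneg p v) (by rw [he]; positivity), he]

theorem abs_polyPotDeriv_le (hp : 1 < p) (v w : Fin n → ℝ) :
    |polyPotDeriv p v w| ≤ 2 * posPowSum p v ^ (1 / p) * (∑ i, |w i| ^ p) ^ (1 / p) := by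
  have hS := posPowSum_nonneg p v
  have hp0 : 0 < p := by linarith
  rw [polyPotDeriv_eq, abs_mul, abs_of_nonneg (by positivity)]
  calc 2 * posPowSum p v ^ ((2 - p) / p) * |∑ i, max (v i) 0 ^ (p - 1) * w i|
      ≤ 2 * posPowSum p v ^ ((2 - p) / p)
        * (posPowSum p v ^ ((p - 1) / p) * (∑ i, |w i| ^ p) ^ (1 / p)) := by
        gcongr
        exact abs_sum_rpow_sub_one_mul_le hp (fun i => le_max_right _ _) w
    _ = _ := by
        have he : (2 - p) / p + (p - 1) / p = 1 / p := by ring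
        rw [mul_assoc, ← mul_assoc (posPowSum p v ^ _), ← rpow_add' hS (by rw [he]; positivity), he,
          mul_assoc]

theorem polyPotDeriv_le (hp : 1 < p) (v z : Fin n → ℝ) :
    polyPotDeriv p v z ≤ 2 * posPowSum p v ^ (1 / p) * posPowSum p z ^ (1 / p) :=
  calc polyPotDeriv p v z ≤ polyPotDeriv p v (fun i => max (z i) 0) :=
        sum_le_sum fun i _ => mul_le_mul_of_nonneg_left (le_max_left _ _) (polyPotGrad_nonneg p v i)
    _ ≤ _ := (le_abs_self _).trans <| by
        simpa only [abs_of_nonneg (le_max_right _ (0 : ℝ)), posPowSum]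
          using abs_polyPotDeriv_le hp v (fun i => max (z i) 0)

-- With `A = ‖v⁺‖_p` and `B = ‖z⁺‖_p` this is `A² + 2AB - 2A² ≤ B²`.
theorem polyPot_add_polyPotDeriv_sub_le (hp : 1 < p) (v z : Fin n → ℝ) :
    polyPot p v + polyPotDeriv p v (z - v) ≤ polyPot p z := by
  have hsub : polyPotDeriv p v (z - v) = polyPotDeriv p v z - polyPotDeriv p v v := by
    simp only [polyPotDeriv, Pi.sub_apply, mul_sub, sum_sub_distrib]
  have hv : polyPot p v = (posPowSum p v ^ (1 / p)) ^ 2 := by rw [polyPot, pNorm_max_zero]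
  have hz : polyPot p z = (posPowSum p z ^ (1 / p)) ^ 2 := by rw [polyPot, pNorm_max_zero]
  rw [hsub, polyPotDeriv_self hp]
  nlinarith [polyPotDeriv_le hp v z, sq_nonneg (posPowSum p v ^ (1 / p) - posPowSum p z ^ (1 / p))]

end Potential

section Line

variable {n : ℕ} {p : ℝ} (x y : Fin n → ℝ)

theorem hasDerivAt_posPowSum_line (hp : 1 < p) (t : ℝ) :
    HasDerivAt (fun s => posPowSum p (x + s • y))
      (p * ∑ i, max ((x + t • y) i) 0 ^ (p - 1) * y i) t := by
  rw [mul_sum]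
  refine HasDerivAt.fun_sum fun i _ => ?_
  have := (hasDerivAt_max_zero_rpow hp _).comp t ((hasDerivAt_mul_const (y i)).const_add (x i))
  exact this.congr_deriv (by simp only [Pi.add_apply, Pi.smul_apply, smul_eq_mul]; ring)

theorem polyPot_line_le_of_posPowSum_eq_zero (hp : 0 < p) {t : ℝ}
    (ht : posPowSum p (x + t • y) = 0) (s : ℝ) :
    polyPot p (x + s • y) ≤ pNorm p y ^ 2 * (s - t) ^ 2 := by
  have hnonpos := (posPowSum_eq_zero_iff hp).1 ht
  have hle : posPowSum p (x + s • y) ≤ |s - t| ^ p * ∑ i, |y i| ^ p := by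
    rw [mul_sum]
    refine sum_le_sum fun i _ => ?_
    rw [← mul_rpow (abs_nonneg _) (abs_nonneg _), ← abs_mul]
    refine rpow_le_rpow (le_max_right _ _) (max_le ?_ (abs_nonneg _)) hp.le
    have := hnonpos i
    simp only [Pi.add_apply, Pi.smul_apply, smul_eq_mul] at this ⊢
    linarith [le_abs_self ((s - t) * y i)]
  calc polyPot p (x + s • y) ≤ (|s - t| ^ p * ∑ i, |y i| ^ p) ^ (2 / p) := by
        rw [polyPot_eq_posPowSum_rpow]
        exact rpow_le_rpow (posPowSum_nonneg p _) hle (by positivity)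
    _ = pNorm p y ^ 2 * (s - t) ^ 2 := by
        rw [mul_rpow (by positivity) (sum_nonneg fun _ _ => rpow_nonneg (abs_nonneg _) _),
          ← rpow_mul (abs_nonneg _), mul_div_cancel₀ _ hp.ne', pNorm_sq, mul_comm]
        norm_cast
        rw [sq_abs]

theorem hasDerivAt_polyPot_line (hp : 1 < p) (t : ℝ) :
    HasDerivAt (fun s => polyPot p (x + s • y)) (polyPotDeriv p (x + t • y) y) t := by
  have hp0 : 0 < p := by linarith
  rcases (posPowSum_nonneg p (x + t • y)).eq_or_lt with hS | hS
  · rw [polyPotDeriv_of_posPowSum_eq_zero hp hS.symm]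
    refine hasDerivAt_zero_of_abs_le (g := fun s => pNorm p y ^ 2 * (s - t) ^ 2) ?_ (by simp) ?_
      fun s => ?_
    · simpa using ((hasDerivAt_id t).sub_const t).pow 2 |>.const_mul (pNorm p y ^ 2)
    · rw [polyPot_eq_posPowSum_rpow, ← hS, zero_rpow (by positivity)]
    · rw [abs_of_nonneg (by rw [polyPot]; positivity)]
      exact polyPot_line_le_of_posPowSum_eq_zero x y hp0 hS.symm s
  · simp only [polyPot_eq_posPowSum_rpow]
    refine ((hasDerivAt_rpow_const (Or.inl hS.ne')).comp t
      (hasDerivAt_posPowSum_line x y hp t)).congr_deriv ?_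
    rw [polyPotDeriv_eq, show 2 / p - 1 = (2 - p) / p by field_simp]
    field_simp

theorem continuous_polyPotDeriv_line (hp : 1 < p) :
    Continuous fun t : ℝ => polyPotDeriv p (x + t • y) y := by
  have hp0 : 0 < p := by linarith
  have hS : Continuous fun t : ℝ => posPowSum p (x + t • y) :=
    continuous_iff_continuousAt.2 fun t => (hasDerivAt_posPowSum_line x y hp t).continuousAt
  refine continuous_iff_continuousAt.2 fun t => ?_
  rcases (posPowSum_nonneg p (x + t • y)).eq_or_lt with hSt | hSt
  · have h0 : Tendsto (fun s => 2 * posPowSum p (x + s • y) ^ (1 / p) * (∑ i, |y i| ^ p) ^ (1 / p))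
        (𝓝 t) (𝓝 0) := by
      have := (((hS.tendsto t).rpow_const (Or.inr (by positivity : 0 ≤ 1 / p))).const_mul
        2).mul_const ((∑ i, |y i| ^ p) ^ (1 / p))
      rwa [← hSt, zero_rpow (by positivity), mul_zero, zero_mul] at this
    rw [ContinuousAt, polyPotDeriv_of_posPowSum_eq_zero hp hSt.symm]
    exact squeeze_zero_norm (fun s => abs_polyPotDeriv_le hp _ y) h0
  · simp only [polyPotDeriv_eq]
    refine (continuousAt_const.mul ((hS.continuousAt).rpow_const (Or.inl hSt.ne'))).mul ?_
    have hline : Continuous fun s : ℝ => x + s • y := by fun_prop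
    refine (continuous_finsetSum _ fun i _ => ?_).continuousAt
    exact (((continuous_apply i).comp hline).max continuous_const |>.rpow_const
      fun _ => Or.inr (by linarith)).mul continuous_const

theorem hasDerivAt_sum_max_zero_rpow_mul_line (hp : 1 < p) {t : ℝ}
    (ht : ∀ i, y i ≠ 0 → (x + t • y) i ≠ 0) :
    HasDerivAt (fun s => ∑ i, max ((x + s • y) i) 0 ^ (p - 1) * y i)
      ((p - 1) * ∑ i, (if 0 < (x + t • y) i then (x + t • y) i ^ (p - 2) else 0) * y i ^ 2) t := by
  rw [mul_sum]
  refine HasDerivAt.fun_sum fun i _ => ?_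
  by_cases hy : y i = 0
  · simpa [hy] using hasDerivAt_const t (0 : ℝ)
  have hline : HasDerivAt (fun s => (x + s • y) i) (y i) t :=
    (hasDerivAt_mul_const (y i)).const_add (x i)
  rcases (ht i hy).lt_or_gt with hneg | hpos
  · refine (((hasDerivAt_max_zero_rpow_of_neg (q := p - 1) (by linarith) hneg).comp t
      hline).mul_const (y i)).congr_deriv ?_
    rw [if_neg hneg.not_gt]
    ring
  · refine (((hasDerivAt_max_zero_rpow_of_pos hpos).comp t hline).mul_const (y i)).congr_deriv ?_
    rw [if_pos hpos, show p - 1 - 1 = p - 2 by ring]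
    ring

theorem polyPotDeriv_line_eventuallyEq_zero (hp : 1 < p) {t : ℝ}
    (ht : ∀ i, y i ≠ 0 → (x + t • y) i ≠ 0) (hS : posPowSum p (x + t • y) = 0) :
    (fun s => polyPotDeriv p (x + s • y) y) =ᶠ[𝓝 t] fun _ => 0 := by
  have hp0 : 0 < p := by linarith
  have hnonpos := (posPowSum_eq_zero_iff hp0).1 hS
  have hev : ∀ᶠ s in 𝓝 t, ∀ i, (x + s • y) i ≤ 0 := by
    refine eventually_all.2 fun i => ?_
    by_cases hy : y i = 0
    · refine Eventually.of_forall fun s => ?_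
      simpa [hy] using hnonpos i
    · have hcont : Continuous fun s : ℝ => (x + s • y) i := by fun_prop
      exact (hcont.continuousAt.eventually_lt continuousAt_const
        ((hnonpos i).lt_of_ne (ht i hy))).mono fun s hs => hs.le
  exact hev.mono fun s hs =>
    polyPotDeriv_of_posPowSum_eq_zero hp ((posPowSum_eq_zero_iff hp0).2 hs) y

theorem exists_hasDerivAt_polyPotDeriv_line_le (hp : 2 ≤ p) {t : ℝ}
    (ht : ∀ i, y i ≠ 0 → (x + t • y) i ≠ 0) :
    ∃ d ≤ 2 * (p - 1) * pNorm p y ^ 2,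
      HasDerivAt (fun s => polyPotDeriv p (x + s • y) y) d t := by
  have hp1 : 1 < p := by linarith
  have hp0 : 0 < p := by linarith
  rcases (posPowSum_nonneg p (x + t • y)).eq_or_lt with hS | hS
  · exact ⟨0, by nlinarith [sq_nonneg (pNorm p y)], (hasDerivAt_const t 0).congr_of_eventuallyEq
      (polyPotDeriv_line_eventuallyEq_zero x y hp1 ht hS.symm)⟩
  set S := posPowSum p (x + t • y)
  set T := ∑ i, max ((x + t • y) i) 0 ^ (p - 1) * y i
  set D := ∑ i, (if 0 < (x + t • y) i then (x + t • y) i ^ (p - 2) else 0) * y i ^ 2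
  have hfactor : HasDerivAt (fun s => 2 * posPowSum p (x + s • y) ^ ((2 - p) / p))
      (2 * (p * T * ((2 - p) / p) * S ^ ((2 - p) / p - 1))) t :=
    ((hasDerivAt_posPowSum_line x y hp1 t).rpow_const (Or.inl hS.ne')).const_mul 2
  have hG : (fun s : ℝ => polyPotDeriv p (x + s • y) y) = fun s =>
      2 * posPowSum p (x + s • y) ^ ((2 - p) / p) * ∑ i, max ((x + s • y) i) 0 ^ (p - 1) * y i :=
    funext fun s => polyPotDeriv_eq p _ y
  rw [hG]
  refine ⟨_, ?_, hfactor.mul (hasDerivAt_sum_max_zero_rpow_mul_line x y hp1 ht)⟩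
  have hfactor_term : 2 * (p * T * ((2 - p) / p) * S ^ ((2 - p) / p - 1)) * T ≤ 0 := by
    have : 2 * (p * T * ((2 - p) / p) * S ^ ((2 - p) / p - 1)) * T
        = (2 - p) * (2 * S ^ ((2 - p) / p - 1) * T ^ 2) := by
      field_simp
    rw [this]
    exact mul_nonpos_of_nonpos_of_nonneg (by linarith) (by positivity)
  have hsum_term : 2 * S ^ ((2 - p) / p) * ((p - 1) * D) ≤ 2 * (p - 1) * pNorm p y ^ 2 :=
    calc 2 * S ^ ((2 - p) / p) * ((p - 1) * D)
        ≤ 2 * S ^ ((2 - p) / p) * ((p - 1) * (S ^ ((p - 2) / p) * (∑ i, |y i| ^ p) ^ (2 / p))) := by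
          gcongr
          exact sum_ite_rpow_mul_sq_le hp _ y
      _ = 2 * (p - 1) * (S ^ ((2 - p) / p) * S ^ ((p - 2) / p)) * (∑ i, |y i| ^ p) ^ (2 / p) := by
          ring
      _ = 2 * (p - 1) * pNorm p y ^ 2 := by
          rw [← rpow_add hS, show (2 - p) / p + (p - 2) / p = 0 by ring, rpow_zero, pNorm_sq]
          ring
  linarith

theorem polyPotDeriv_line_sub_le (hp : 2 ≤ p) {a b : ℝ} (hab : a ≤ b) :
    polyPotDeriv p (x + b • y) y - polyPotDeriv p (x + a • y) y
      ≤ 2 * (p - 1) * pNorm p y ^ 2 * (b - a) := by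
  refine sub_le_mul_sub_of_hasDerivAt_le_off_finset (univ.image fun i => -x i / y i) hab
    (continuous_polyPotDeriv_line x y (by linarith)).continuousOn fun t _ htE => ?_
  refine exists_hasDerivAt_polyPotDeriv_line_le x y hp fun i hy hzero => htE ?_
  refine Finset.mem_image.2 ⟨i, Finset.mem_univ i, ?_⟩
  simp only [Pi.add_apply, Pi.smul_apply, smul_eq_mul] at hzero
  field_simp
  linarith

end Line

theorem stmt_9 {n : ℕ} (p : ℝ) (hp : 2 ≤ p) (x y : Fin n → ℝ) :
    ∃ g : Fin n → ℝ,
      (∀ z : Fin n → ℝ, polyPot p x + ∑ i, g i * (z i - x i) ≤ polyPot p z) ∧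
      polyPot p (fun i => max (x i + y i) 0)
        ≤ polyPot p x + (∑ i, g i * y i) + (p - 1) * pNorm p y ^ 2 := by
  refine ⟨polyPotGrad p x, fun z => polyPot_add_polyPotDeriv_sub_le (by linarith) x z, ?_⟩
  have hdescent := le_add_deriv_add_of_deriv_sub_le (hasDerivAt_polyPot_line x y (by linarith))
    fun t ht => by simpa using polyPotDeriv_line_sub_le x y hp ht.1
  simp only [zero_smul, add_zero, one_smul] at hdescent
  calc polyPot p (fun i => max (x i + y i) 0) = polyPot p (x + y) := polyPot_max_zero p (x + y)
    _ ≤ _ := hdescent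
    _ = _ := by
      unfold polyPotDeriv
      ring
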